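/- Let μ ∈ ℝ, σ > 0, q > 0, δ > 0, r > 0, β > 0. Let V : [0,∞) → ℝ be the explicit Parisian refracted scale function of the linear Brownian motion model, V(x) = (σ²/2) 𝕎^{(q)}(x)·K + (e^{qr}/ρ^Y)(ρ₁^Y e^{ρ₂^Y x} + ρ₂^Y e^{−ρ₁^Y x}) with K = (2/√(2πσ²r)) e^{−rμ²/(2σ²)} + ρ₂ e^{qr} − ρ e^{qr} Φ(−r√(μ²+2qσ²)/(σ√r)). Define g(c₁,c₂) = (V(c₂) − V(c₁))/(c₂ − c₁ − β) on dom(g) = {(c₁,c₂) : c₁ ≥ 0, c₂ > c₁ + β}. Then g attains its infimum on dom(g), and every minimizer (c₁*, c₂*) satisfies V′(c₂*) = (V(c₂*) − V(c₁*))/(c₂* − c₁* − β); moreover either V′(c₁*) = V′(c₂*) or c₁* = 0. -/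

import Mathlib

open MeasureTheory Real

/- Linear Brownian motion model: X_t = μt + σB_t, Y_t = X_t − δt.  V is the
   explicit Parisian refracted scale function; g(c₁,c₂) is the cost ratio of
   the impulse (c₁,c₂) policy with transaction cost β.  The claim: g attains
   its infimum on dom(g) = {c₁ ≥ 0, c₂ > c₁ + β}, and every minimizer
   (c₁*,c₂*) satisfies the first-order condition
   V′(c₂*) = (V(c₂*) − V(c₁*))/(c₂* − c₁* − β), and moreover either
   V′(c₁*) = V′(c₂*) or c₁* = 0. -/

noncomputable def rho1 (μ σ q : ℝ) : ℝ := (Real.sqrt (μ ^ 2 + 2 * q * σ ^ 2) + μ) / σ ^ 2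

noncomputable def rho2 (μ σ q : ℝ) : ℝ := (Real.sqrt (μ ^ 2 + 2 * q * σ ^ 2) - μ) / σ ^ 2

noncomputable def rho (μ σ q : ℝ) : ℝ := rho1 μ σ q + rho2 μ σ q

noncomputable def rho1Y (μ σ q δ : ℝ) : ℝ := rho1 (μ - δ) σ q

noncomputable def rho2Y (μ σ q δ : ℝ) : ℝ := rho2 (μ - δ) σ q

noncomputable def rhoY (μ σ q δ : ℝ) : ℝ := rho1Y μ σ q δ + rho2Y μ σ q δ

/-- The q-scale function 𝕎^{(q)} of Y (its formula on [0,∞)). -/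
noncomputable def WWq (μ σ q δ x : ℝ) : ℝ :=
  2 / (σ ^ 2 * rhoY μ σ q δ) *
    (Real.exp (rho2Y μ σ q δ * x) - Real.exp (-(rho1Y μ σ q δ) * x))

/-- Standard normal cumulative distribution function. -/
noncomputable def stdNormalCDF (x : ℝ) : ℝ :=
  ∫ t in Set.Iic x, (Real.sqrt (2 * Real.pi))⁻¹ * Real.exp (-t ^ 2 / 2)

/-- The constant K in the explicit formula for V^{(q)}. -/
noncomputable def Kconst (μ σ q r : ℝ) : ℝ :=
  2 / Real.sqrt (2 * Real.pi * σ ^ 2 * r) * Real.exp (-(r * μ ^ 2) / (2 * σ ^ 2)) +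
    rho2 μ σ q * Real.exp (q * r) -
    rho μ σ q * Real.exp (q * r) *
      stdNormalCDF (-(r * Real.sqrt (μ ^ 2 + 2 * q * σ ^ 2)) / (σ * Real.sqrt r))

/-- The explicit Parisian refracted scale function V^{(q)} on [0,∞) for the
linear Brownian motion model. -/
noncomputable def Vq (μ σ q δ r x : ℝ) : ℝ :=
  σ ^ 2 / 2 * WWq μ σ q δ x * Kconst μ σ q r +
    Real.exp (q * r) / rhoY μ σ q δ *
      (rho1Y μ σ q δ * Real.exp (rho2Y μ σ q δ * x) +
        rho2Y μ σ q δ * Real.exp (-(rho1Y μ σ q δ) * x))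

/-- The cost-ratio function g of the impulse (c₁,c₂) policy. -/
noncomputable def gfun (μ σ q δ r β c₁ c₂ : ℝ) : ℝ :=
  (Vq μ σ q δ r c₂ - Vq μ σ q δ r c₁) / (c₂ - c₁ - β)


open Set Filter

lemma gauss_tail {y : ℝ} (hy : 0 < y) :
    stdNormalCDF (-y) ≤ Real.exp (-y ^ 2 / 2) / (y * Real.sqrt (2 * Real.pi)) := by
  have hπ : (0:ℝ) < Real.sqrt (2 * Real.pi) := Real.sqrt_pos.2 (by positivity)
  have hc : (0:ℝ) < (Real.sqrt (2 * Real.pi))⁻¹ := by positivity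
  have hint : Integrable (fun t : ℝ => ((Real.sqrt (2 * Real.pi))⁻¹/y) * ((-t) * Real.exp (-t^2/2))) := by
    have h1 : Integrable (fun t : ℝ => t * Real.exp (-(1/2) * t ^ 2)) :=
      integrable_mul_exp_neg_mul_sq (by norm_num)
    have := h1.const_mul (-(Real.sqrt (2 * Real.pi))⁻¹/y)
    convert this using 2 with t
    rw [show -(1/2) * t^2 = -t^2/2 by ring]
    ring
  have hgint : Integrable (fun t : ℝ => (Real.sqrt (2 * Real.pi))⁻¹ * Real.exp (-t ^ 2 / 2)) := by
    have h1 : Integrable (fun t : ℝ => Real.exp (-(1/2) * t ^ 2)) :=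
      integrable_exp_neg_mul_sq (by norm_num)
    have := h1.const_mul (Real.sqrt (2 * Real.pi))⁻¹
    convert this using 2 with t
    rw [show -(1/2) * t^2 = -t^2/2 by ring]
  have hFTC : ∫ t in Set.Iic (-y), (-t) * Real.exp (-t^2/2) = Real.exp (-(-y)^2/2) := by
    have := integral_Iic_of_hasDerivAt_of_tendsto' (a := -y)
      (f := fun t : ℝ => Real.exp (-t^2/2)) (f' := fun t => (-t) * Real.exp (-t^2/2))
      (m := 0) ?_ ?_ ?_
    · rw [this, sub_zero]
    · intro x _
      have h := (((hasDerivAt_id x).pow 2).neg.div_const 2).exp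
      refine h.congr_deriv ?_
      simp only [Pi.neg_apply, Pi.pow_apply, id]; norm_num; ring
    · have h1 : Integrable (fun t : ℝ => t * Real.exp (-(1/2) * t ^ 2)) :=
        integrable_mul_exp_neg_mul_sq (by norm_num)
      have h2 := h1.neg.integrableOn (s := Set.Iic (-y))
      apply h2.congr_fun ?_ measurableSet_Iic
      intro t _
      show -(t * Real.exp (-(1/2) * t ^ 2)) = _
      rw [show -(1/2) * t^2 = -t^2/2 by ring]; ring
    · have hsq : Tendsto (fun t : ℝ => t^2) atBot atTop := by
        have := (tendsto_pow_atTop (α := ℝ) (n := 2) (by norm_num)).comp tendsto_neg_atBot_atTop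
        refine this.congr fun t => ?_
        simp [neg_sq]
      have h2 : Tendsto (fun t : ℝ => -t^2/2) atBot atBot := by
        have := (tendsto_neg_atTop_atBot.comp hsq).atBot_div_const (by norm_num : (0:ℝ) < 2)
        exact this
      exact Real.tendsto_exp_atBot.comp h2
  have hmono : stdNormalCDF (-y) ≤ ∫ t in Set.Iic (-y), ((Real.sqrt (2 * Real.pi))⁻¹/y) * ((-t) * Real.exp (-t^2/2)) := by
    rw [stdNormalCDF]
    apply setIntegral_mono_on hgint.integrableOn hint.integrableOn measurableSet_Iic
    intro t ht
    simp only [Set.mem_Iic] at ht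
    have h1 : 1 ≤ -t / y := by rw [le_div_iff₀ hy]; linarith
    have hE := Real.exp_pos (-t^2/2)
    have : Real.exp (-t^2/2) ≤ (-t/y) * Real.exp (-t^2/2) := le_mul_of_one_le_left hE.le h1
    calc (Real.sqrt (2 * Real.pi))⁻¹ * Real.exp (-t^2/2)
        ≤ (Real.sqrt (2 * Real.pi))⁻¹ * ((-t/y) * Real.exp (-t^2/2)) :=
          mul_le_mul_of_nonneg_left this hc.le
      _ = (Real.sqrt (2 * Real.pi))⁻¹/y * ((-t) * Real.exp (-t^2/2)) := by ring
  calc stdNormalCDF (-y) ≤ _ := hmono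
    _ = (Real.sqrt (2 * Real.pi))⁻¹/y * ∫ t in Set.Iic (-y), (-t) * Real.exp (-t^2/2) := by
        rw [MeasureTheory.integral_const_mul]
    _ = Real.exp (-y^2/2) / (y * Real.sqrt (2 * Real.pi)) := by
        rw [hFTC, neg_sq]
        field_simp

lemma rho2_pos' (μ σ q : ℝ) (hσ : 0 < σ) (hq : 0 < q) : 0 < rho2 μ σ q := by
  have h2 : Real.sqrt (μ ^ 2) < Real.sqrt (μ ^ 2 + 2 * q * σ ^ 2) :=
    Real.sqrt_lt_sqrt (sq_nonneg μ) (by nlinarith [mul_pos hq (pow_pos hσ 2)])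
  have h1 : μ < Real.sqrt (μ ^ 2 + 2 * q * σ ^ 2) := by
    calc μ ≤ |μ| := le_abs_self μ
      _ = Real.sqrt (μ ^ 2) := (Real.sqrt_sq_eq_abs μ).symm
      _ < _ := h2
  exact div_pos (by linarith) (by positivity)

lemma rho1_pos' (μ σ q : ℝ) (hσ : 0 < σ) (hq : 0 < q) : 0 < rho1 μ σ q := by
  have h2 : Real.sqrt (μ ^ 2) < Real.sqrt (μ ^ 2 + 2 * q * σ ^ 2) :=
    Real.sqrt_lt_sqrt (sq_nonneg μ) (by nlinarith [mul_pos hq (pow_pos hσ 2)])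
  have h1 : -μ < Real.sqrt (μ ^ 2 + 2 * q * σ ^ 2) := by
    calc -μ ≤ |μ| := neg_le_abs μ
      _ = Real.sqrt (μ ^ 2) := (Real.sqrt_sq_eq_abs μ).symm
      _ < _ := h2
  exact div_pos (by linarith) (by positivity)

lemma Kpos (μ σ q r : ℝ) (hσ : 0 < σ) (hq : 0 < q) (hr : 0 < r) : 0 < Kconst μ σ q r := by
  set A : ℝ := Real.sqrt (μ ^ 2 + 2 * q * σ ^ 2) with hAdef
  have hA2 : A ^ 2 = μ ^ 2 + 2 * q * σ ^ 2 := Real.sq_sqrt (by positivity)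
  have hApos : 0 < A := Real.sqrt_pos.2 (by positivity)
  have hsr : 0 < Real.sqrt r := Real.sqrt_pos.2 hr
  have hrr : Real.sqrt r * Real.sqrt r = r := Real.mul_self_sqrt hr.le
  have hπ : 0 < Real.sqrt (2 * Real.pi) := Real.sqrt_pos.2 (by positivity)
  set y : ℝ := Real.sqrt r * A / σ with hydef
  have hy : 0 < y := by positivity
  have harg : -(r * A) / (σ * Real.sqrt r) = -y := by
    rw [hydef, ← hrr]
    field_simp
    simp only [Real.sqrt_sq hsr.le]
  have hρ : rho μ σ q = 2 * A / σ ^ 2 := by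
    unfold rho rho1 rho2
    rw [← hAdef]
    field_simp
    ring
  have hρpos : 0 < rho μ σ q := by rw [hρ]; positivity
  have htail := gauss_tail hy
  have hexp : Real.exp (q * r) * Real.exp (-y ^ 2 / 2) = Real.exp (-(r * μ ^ 2) / (2 * σ ^ 2)) := by
    rw [← Real.exp_add]
    congr 1
    have hy2 : y ^ 2 = r * A ^ 2 / σ ^ 2 := by
      rw [hydef, div_pow, mul_pow, Real.sq_sqrt hr.le]
    rw [hy2, hA2]
    field_simp
    ring
  have hsplit : Real.sqrt (2 * Real.pi * σ ^ 2 * r) = Real.sqrt (2 * Real.pi) * σ * Real.sqrt r := by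
    rw [show 2 * Real.pi * σ ^ 2 * r = (2 * Real.pi) * (σ ^ 2 * r) by ring,
      Real.sqrt_mul (by positivity), Real.sqrt_mul (sq_nonneg σ), Real.sqrt_sq hσ.le, mul_assoc]
  have heq : rho μ σ q * Real.exp (q * r) * (Real.exp (-y ^ 2 / 2) / (y * Real.sqrt (2 * Real.pi)))
      = 2 / Real.sqrt (2 * Real.pi * σ ^ 2 * r) * Real.exp (-(r * μ ^ 2) / (2 * σ ^ 2)) := by
    rw [hρ, hsplit, ← hexp, hydef]
    field_simp
  have hbound : rho μ σ q * Real.exp (q * r) *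
      stdNormalCDF (-(r * A) / (σ * Real.sqrt r)) ≤
      2 / Real.sqrt (2 * Real.pi * σ ^ 2 * r) * Real.exp (-(r * μ ^ 2) / (2 * σ ^ 2)) := by
    rw [harg, ← heq]
    exact mul_le_mul_of_nonneg_left htail (mul_pos hρpos (Real.exp_pos _)).le
  have hρ2 : 0 < rho2 μ σ q * Real.exp (q * r) :=
    mul_pos (rho2_pos' μ σ q hσ hq) (Real.exp_pos _)
  unfold Kconst
  rw [← hAdef]
  linarith

set_option maxHeartbeats 1000000 in
lemma abstract_min (f : ℝ → ℝ) (a b C1 C2 β : ℝ) (ha : 0 < a) (hb : 0 < b)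
    (hC1 : 0 < C1) (hβ : 0 < β) (hK : 0 < a * C1 - b * C2)
    (hfe : f = fun x => C1 * Real.exp (a * x) + C2 * Real.exp (-(b * x))) :
    (∃ c₁ c₂ : ℝ, 0 ≤ c₁ ∧ c₁ + β < c₂ ∧
      ∀ d₁ d₂ : ℝ, 0 ≤ d₁ → d₁ + β < d₂ →
        (f c₂ - f c₁) / (c₂ - c₁ - β) ≤ (f d₂ - f d₁) / (d₂ - d₁ - β)) ∧
    ∀ c₁ c₂ : ℝ, 0 ≤ c₁ → c₁ + β < c₂ →
      (∀ d₁ d₂ : ℝ, 0 ≤ d₁ → d₁ + β < d₂ →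
        (f c₂ - f c₁) / (c₂ - c₁ - β) ≤ (f d₂ - f d₁) / (d₂ - d₁ - β)) →
      deriv f c₂ = (f c₂ - f c₁) / (c₂ - c₁ - β) ∧
        (deriv f c₁ = deriv f c₂ ∨ c₁ = 0) := by
  subst hfe
  set f : ℝ → ℝ := fun x => C1 * Real.exp (a * x) + C2 * Real.exp (-(b * x)) with hfdef
  set f' : ℝ → ℝ := fun x => C1 * a * Real.exp (a * x) - C2 * b * Real.exp (-(b * x)) with hf'def
  have hcont : Continuous f := by fun_prop
  have hder : ∀ x, HasDerivAt f (f' x) x := by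
    intro x
    have h1 : HasDerivAt (fun x : ℝ => C1 * Real.exp (a * x)) (C1 * a * Real.exp (a * x)) x := by
      have := (((hasDerivAt_id x).const_mul a).exp).const_mul C1
      simp only [id_eq] at this
      exact this.congr_deriv (by ring)
    have h2 : HasDerivAt (fun x : ℝ => C2 * Real.exp (-(b * x))) (-(C2 * b * Real.exp (-(b * x)))) x := by
      have := ((((hasDerivAt_id x).const_mul b).neg).exp).const_mul C2
      simp only [id_eq] at this
      exact this.congr_deriv (by simp; ring)
    exact h1.add h2
  -- lower bound for f' on [0,∞)
  set m : ℝ := min (a * C1) (a * C1 - b * C2) with hmdef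
  have hm : 0 < m := lt_min (by positivity) hK
  have hf'lb : ∀ x : ℝ, 0 ≤ x → m ≤ f' x := by
    intro x hx
    have e1 : 1 ≤ Real.exp (a * x) := Real.one_le_exp (by positivity)
    have e2 : Real.exp (-(b * x)) ≤ 1 := Real.exp_le_one_iff.mpr (by nlinarith)
    have e3 : 0 < Real.exp (-(b * x)) := Real.exp_pos _
    rcases le_or_gt 0 C2 with h | h
    · calc m ≤ a * C1 - b * C2 := min_le_right _ _
        _ ≤ f' x := by
          simp only [hf'def]
          nlinarith [mul_nonneg (mul_pos ha hC1).le (sub_nonneg.2 e1),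
            mul_nonneg (mul_nonneg hb.le h) (sub_nonneg.2 e2)]
    · calc m ≤ a * C1 := min_le_left _ _
        _ ≤ f' x := by
          simp only [hf'def]
          nlinarith [mul_nonneg (mul_pos ha hC1).le (sub_nonneg.2 e1),
            mul_pos (mul_pos (neg_pos.2 h) hb) e3]
  -- MVT-type bound
  have mvt : ∀ (L x y : ℝ), x ≤ y → (∀ t, x ≤ t → L ≤ f' t) → L * (y - x) ≤ f y - f x := by
    intro L x y hxy hlb
    have hmono : MonotoneOn (fun t => f t - L * t) (Ici x) := by
      apply monotoneOn_of_deriv_nonneg (convex_Ici x)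
      · exact (hcont.sub (continuous_const.mul continuous_id)).continuousOn
      · intro t _
        have h0 : HasDerivAt (fun y : ℝ => L * y) L t := by
          simpa using (hasDerivAt_id t).const_mul L
        exact ((hder t).sub h0).differentiableAt.differentiableWithinAt
      · intro t ht
        rw [interior_Ici] at ht
        have h0 : HasDerivAt (fun y : ℝ => L * y) L t := by
          simpa using (hasDerivAt_id t).const_mul L
        rw [show deriv (fun t => f t - L * t) t = f' t - L from ((hder t).sub h0).deriv]
        have := hlb t (le_of_lt ht)
        linarith
    have := hmono (self_mem_Ici) (show y ∈ Ici x from hxy) hxy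
    simp only at this
    linarith
  have hfmono : ∀ x y : ℝ, 0 ≤ x → x ≤ y → f x ≤ f y := by
    intro x y hx hxy
    have := mvt 0 x y hxy (fun t ht => le_trans hm.le (hf'lb t (le_trans hx ht)))
    linarith
  -- generic lower bound for G
  have Glb : ∀ c₁ c₂ L : ℝ, 0 ≤ c₁ → c₁ + β < c₂ → 0 ≤ L → (∀ t, c₁ ≤ t → L ≤ f' t) →
      L ≤ (f c₂ - f c₁) / (c₂ - c₁ - β) := by
    intro c₁ c₂ L h0 hc hL hlb
    have hden : 0 < c₂ - c₁ - β := by linarith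
    rw [le_div_iff₀ hden]
    have h1 := mvt L c₁ c₂ (by linarith) hlb
    nlinarith
  -- reference value
  set G0 : ℝ := f (β + 1) - f 0 with hG0def
  have hG0 : m ≤ G0 := by
    have := Glb 0 (β + 1) m le_rfl (by linarith) hm.le (fun t ht => hf'lb t ht)
    simpa using this
  have hG0pos : 0 < G0 + 1 := by linarith
  set ε : ℝ := min 1 (m * β / (G0 + 1)) with hεdef
  have hε : 0 < ε := lt_min one_pos (by positivity)
  have hε1 : ε ≤ 1 := min_le_left _ _
  have hε2 : ε * (G0 + 1) ≤ m * β := by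
    have h1 := min_le_right 1 (m * β / (G0 + 1))
    have h2 : (m * β / (G0 + 1)) * (G0 + 1) = m * β := by field_simp
    nlinarith [mul_le_mul_of_nonneg_right h1 hG0pos.le]
  have B1 : ∀ d₁ d₂ : ℝ, 0 ≤ d₁ → d₁ + β < d₂ → d₂ - d₁ - β ≤ ε →
      G0 + 1 ≤ (f d₂ - f d₁) / (d₂ - d₁ - β) := by
    intro d₁ d₂ h0 hd hdenε
    have hdpos : 0 < d₂ - d₁ - β := by linarith
    rw [le_div_iff₀ hdpos]
    have hN : m * (d₂ - d₁) ≤ f d₂ - f d₁ :=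
      mvt m d₁ d₂ (by linarith) (fun t ht => hf'lb t (le_trans h0 ht))
    nlinarith [mul_le_mul_of_nonneg_left hdenε hG0pos.le, mul_pos hm hdpos]
  set C : ℝ := max (b * C2) 0 with hCdef
  have hC0 : 0 ≤ C := le_max_right _ _
  have hf'lb2 : ∀ x t : ℝ, 0 ≤ x → x ≤ t → C1 * a * Real.exp (a * x) - C ≤ f' t := by
    intro x t hx hxt
    have e1 : Real.exp (a * x) ≤ Real.exp (a * t) := Real.exp_le_exp.2 (by nlinarith)
    have e2 : Real.exp (-(b * t)) ≤ 1 := Real.exp_le_one_iff.mpr (by nlinarith)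
    have e3 : 0 < Real.exp (-(b * t)) := Real.exp_pos _
    have hbC : b * C2 ≤ C := le_max_left _ _
    simp only [hf'def]
    rcases le_or_gt 0 C2 with h | h
    · nlinarith [mul_le_mul_of_nonneg_left e1 (mul_pos hC1 ha).le,
        mul_nonneg (mul_nonneg h hb.le) (sub_nonneg.2 e2)]
    · nlinarith [mul_le_mul_of_nonneg_left e1 (mul_pos hC1 ha).le,
        mul_pos (mul_pos (neg_pos.2 h) hb) e3]
  set M : ℝ := (max ((G0 + 1 + C) / (a * C1)) 0) / a + 1 with hMdef
  have hM0 : 0 ≤ M := by positivity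
  have hMb : ∀ t, M ≤ t → G0 + 1 ≤ f' t := by
    intro t ht
    have hkey : G0 + 1 ≤ C1 * a * Real.exp (a * M) - C := by
      have h1 := Real.add_one_le_exp (a * M)
      have haM : a * M = max ((G0 + 1 + C) / (a * C1)) 0 + a := by
        rw [hMdef]; field_simp
      have h2 : (G0 + 1 + C) / (a * C1) ≤ a * M := by
        rw [haM]; linarith [le_max_left ((G0 + 1 + C) / (a * C1)) 0]
      have h4 : a * C1 * ((G0 + 1 + C) / (a * C1)) = G0 + 1 + C := by
        field_simp
      have s1 : C1 * a * (a * M + 1) ≤ C1 * a * Real.exp (a * M) :=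
        mul_le_mul_of_nonneg_left h1 (mul_pos hC1 ha).le
      have s2 : a * C1 * ((G0 + 1 + C) / (a * C1)) ≤ a * C1 * (a * M) :=
        mul_le_mul_of_nonneg_left h2 (mul_pos ha hC1).le
      have s3 : G0 + 1 + C ≤ a * C1 * (a * M) := h4 ▸ s2
      nlinarith [s1, s3, mul_pos hC1 ha]
    calc G0 + 1 ≤ C1 * a * Real.exp (a * M) - C := hkey
      _ ≤ f' t := hf'lb2 M t hM0 ht
  set E' : ℝ := max (f M + max (-C2) 0) 0 with hE'def
  have hE1 : f M + max (-C2) 0 ≤ E' := le_max_left _ _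
  have hE0 : 0 ≤ E' := le_max_right _ _
  set k : ℝ := C1 * a ^ 2 / 4 with hkdef
  have hk : 0 < k := by positivity
  set M' : ℝ := max (β + 1) (max 1 ((G0 + 1 + E' + 1) / k)) with hM'def
  have hM'1 : 1 ≤ M' := le_trans (le_max_left 1 _) (le_max_right _ _)
  have hM'β : β + 1 ≤ M' := le_max_left _ _
  have hM'k : (G0 + 1 + E' + 1) / k ≤ M' := le_trans (le_max_right _ _) (le_max_right _ _)
  have hquad : ∀ x : ℝ, 0 ≤ x → x ^ 2 / 4 ≤ Real.exp x := by
    intro x hx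
    have h1 := Real.add_one_le_exp (x / 2)
    have h2 : Real.exp (x / 2) * Real.exp (x / 2) = Real.exp x := by
      rw [← Real.exp_add]; ring_nf
    nlinarith [Real.exp_pos (x / 2)]
  have B3 : ∀ d₁ d₂ : ℝ, 0 ≤ d₁ → d₁ + β < d₂ → d₁ ≤ M → M' ≤ d₂ →
      G0 + 1 ≤ (f d₂ - f d₁) / (d₂ - d₁ - β) := by
    intro d₁ d₂ h0 hd hdM hdM'
    have hden : 0 < d₂ - d₁ - β := by linarith
    have hd2 : 1 ≤ d₂ := le_trans hM'1 hdM'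
    rw [le_div_iff₀ hden]
    have h1 : f d₁ ≤ f M := hfmono d₁ M h0 hdM
    have h2 : C1 * Real.exp (a * d₂) - max (-C2) 0 ≤ f d₂ := by
      simp only [hfdef]
      have e2 : Real.exp (-(b * d₂)) ≤ 1 := Real.exp_le_one_iff.mpr (by nlinarith)
      have e3 : 0 < Real.exp (-(b * d₂)) := Real.exp_pos _
      have hm1 : -C2 ≤ max (-C2) 0 := le_max_left _ _
      have hm2 : (0:ℝ) ≤ max (-C2) 0 := le_max_right _ _
      rcases le_or_gt 0 C2 with h | h
      · nlinarith [mul_nonneg h e3.le]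
      · nlinarith [mul_le_mul_of_nonneg_left e2 (by linarith : (0:ℝ) ≤ -C2)]
    have h3 : k * d₂ ^ 2 ≤ C1 * Real.exp (a * d₂) := by
      have hq := hquad (a * d₂) (by nlinarith)
      have := mul_le_mul_of_nonneg_left hq hC1.le
      rw [hkdef]; linarith [this]
    have h4 : (G0 + 1 + E' + 1) * d₂ ≤ k * d₂ ^ 2 := by
      have h6 : k * ((G0 + 1 + E' + 1) / k) = G0 + 1 + E' + 1 := by field_simp
      have h5 : G0 + 1 + E' + 1 ≤ k * d₂ :=
        h6 ▸ mul_le_mul_of_nonneg_left (le_trans hM'k hdM') hk.le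
      linarith [mul_le_mul_of_nonneg_right h5 (by linarith : (0:ℝ) ≤ d₂)]
    linarith [h1, h2, h3, h4, hE1,
      mul_nonneg (by linarith : (0:ℝ) ≤ E' + 1) (by linarith : (0:ℝ) ≤ d₂ - 1),
      mul_nonneg hG0pos.le (by linarith : (0:ℝ) ≤ d₁ + β)]
  have B2 : ∀ d₁ d₂ : ℝ, 0 ≤ d₁ → d₁ + β < d₂ → M ≤ d₁ →
      G0 + 1 ≤ (f d₂ - f d₁) / (d₂ - d₁ - β) := by
    intro d₁ d₂ h0 hd hM1
    exact Glb d₁ d₂ (G0 + 1) h0 hd hG0pos.le (fun t ht => hMb t (le_trans hM1 ht))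
  constructor
  · -- existence of a global minimizer
    set KS : Set (ℝ × ℝ) := Icc ((0:ℝ), (0:ℝ)) (M, M') ∩ {p : ℝ × ℝ | p.1 + β + ε ≤ p.2}
      with hKSdef
    have hKc : IsCompact KS :=
      isCompact_Icc.inter_right (isClosed_le (by fun_prop) (by fun_prop))
    have hne : ((0:ℝ), β + 1) ∈ KS := by
      simp only [hKSdef, Set.mem_inter_iff, Set.mem_Icc, Prod.le_def, Set.mem_setOf_eq]
      refine ⟨⟨⟨le_rfl, by linarith⟩, hM0, hM'β⟩, by linarith⟩
    have hGc : ContinuousOn (fun p : ℝ × ℝ => (f p.2 - f p.1) / (p.2 - p.1 - β)) KS := by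
      apply ContinuousOn.div
      · exact ((hcont.comp continuous_snd).sub (hcont.comp continuous_fst)).continuousOn
      · fun_prop
      · rintro ⟨p1, p2⟩ ⟨-, hp⟩
        simp only [Set.mem_setOf_eq] at hp
        exact ne_of_gt (by simp only; linarith)
    obtain ⟨p, hpK, hpmin⟩ := hKc.exists_isMinOn ⟨_, hne⟩ hGc
    have hpK' := hpK
    simp only [hKSdef, Set.mem_inter_iff, Set.mem_Icc, Prod.le_def, Set.mem_setOf_eq] at hpK'
    obtain ⟨⟨⟨hp1l, hp2l⟩, hp1u, hp2u⟩, hpden⟩ := hpK'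
    refine ⟨p.1, p.2, hp1l, by linarith, ?_⟩
    intro d₁ d₂ h0 hd
    by_cases hdK : (d₁, d₂) ∈ KS
    · simpa using isMinOn_iff.mp hpmin _ hdK
    · have hle : (f p.2 - f p.1) / (p.2 - p.1 - β) ≤ G0 := by
        simpa using isMinOn_iff.mp hpmin _ hne
      have hge : G0 + 1 ≤ (f d₂ - f d₁) / (d₂ - d₁ - β) := by
        by_cases hc1 : d₂ - d₁ - β ≤ ε
        · exact B1 d₁ d₂ h0 hd hc1
        · by_cases hc2 : M ≤ d₁
          · exact B2 d₁ d₂ h0 hd hc2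
          · have hc3 : M' < d₂ := by
              by_contra hcon
              push_neg at hcon
              apply hdK
              push_neg at hc1 hc2
              simp only [hKSdef, Set.mem_inter_iff, Set.mem_Icc, Prod.le_def,
                Set.mem_setOf_eq]
              exact ⟨⟨⟨h0, by linarith⟩, ⟨by linarith, hcon⟩⟩, by linarith⟩
            exact B3 d₁ d₂ h0 hd (by push_neg at hc2; linarith) hc3.le
      linarith
  · -- first-order conditions
    intro c₁ c₂ h0 hc hmin
    have hden : 0 < c₂ - c₁ - β := by linarith
    have hdenne : c₂ - c₁ - β ≠ 0 := ne_of_gt hden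
    have hφden : HasDerivAt (fun t : ℝ => t - c₁ - β) 1 c₂ := by
      simpa using ((hasDerivAt_id c₂).sub_const c₁).sub_const β
    have hφ : HasDerivAt (fun t => (f t - f c₁) / (t - c₁ - β))
        ((f' c₂ * (c₂ - c₁ - β) - (f c₂ - f c₁) * 1) / (c₂ - c₁ - β) ^ 2) c₂ :=
      ((hder c₂).sub_const (f c₁)).div hφden hdenne
    have hloc : IsLocalMin (fun t => (f t - f c₁) / (t - c₁ - β)) c₂ := by
      filter_upwards [eventually_gt_nhds hc] with t ht
      exact hmin c₁ t h0 ht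
    have hz := hloc.hasDerivAt_eq_zero hφ
    have hnum : f' c₂ * (c₂ - c₁ - β) = f c₂ - f c₁ := by
      have h5 := (div_eq_zero_iff.mp hz).resolve_right (pow_ne_zero 2 hdenne)
      linarith
    have hd2 : deriv f c₂ = (f c₂ - f c₁) / (c₂ - c₁ - β) := by
      rw [(hder c₂).deriv, eq_div_iff hdenne]; linarith
    refine ⟨hd2, ?_⟩
    rcases eq_or_lt_of_le h0 with h | h
    · exact Or.inr h.symm
    · left
      have hψden : HasDerivAt (fun s : ℝ => c₂ - s - β) (-1) c₁ := by
        simpa using ((hasDerivAt_id c₁).const_sub c₂).sub_const β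
      have hψ : HasDerivAt (fun s => (f c₂ - f s) / (c₂ - s - β))
          ((-(f' c₁) * (c₂ - c₁ - β) - (f c₂ - f c₁) * (-1)) / (c₂ - c₁ - β) ^ 2) c₁ :=
        ((hder c₁).const_sub (f c₂)).div hψden hdenne
      have hloc2 : IsLocalMin (fun s => (f c₂ - f s) / (c₂ - s - β)) c₁ := by
        filter_upwards [eventually_gt_nhds h,
          eventually_lt_nhds (show c₁ < c₂ - β by linarith)] with s h1 h2
        exact hmin s c₂ h1.le (by linarith)
      have hz2 := hloc2.hasDerivAt_eq_zero hψ
      have hnum2 : f' c₁ * (c₂ - c₁ - β) = f c₂ - f c₁ := by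
        have h5 := (div_eq_zero_iff.mp hz2).resolve_right (pow_ne_zero 2 hdenne)
        linarith
      rw [(hder c₁).deriv, (hder c₂).deriv]
      exact mul_right_cancel₀ hdenne (hnum2.trans hnum.symm)

theorem impulse_policy_first_order_conditions_brownian (μ σ q δ r β : ℝ)
    (hσ : 0 < σ) (hq : 0 < q) (hδ : 0 < δ) (hr : 0 < r) (hβ : 0 < β) :
    (∃ c₁ c₂ : ℝ, 0 ≤ c₁ ∧ c₁ + β < c₂ ∧
      ∀ d₁ d₂ : ℝ, 0 ≤ d₁ → d₁ + β < d₂ →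
        gfun μ σ q δ r β c₁ c₂ ≤ gfun μ σ q δ r β d₁ d₂) ∧
    ∀ c₁ c₂ : ℝ, 0 ≤ c₁ → c₁ + β < c₂ →
      (∀ d₁ d₂ : ℝ, 0 ≤ d₁ → d₁ + β < d₂ →
        gfun μ σ q δ r β c₁ c₂ ≤ gfun μ σ q δ r β d₁ d₂) →
      deriv (Vq μ σ q δ r) c₂
          = (Vq μ σ q δ r c₂ - Vq μ σ q δ r c₁) / (c₂ - c₁ - β) ∧
        (deriv (Vq μ σ q δ r) c₁ = deriv (Vq μ σ q δ r) c₂ ∨ c₁ = 0) := by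
  have ha : 0 < rho2Y μ σ q δ := rho2_pos' (μ - δ) σ q hσ hq
  have hb : 0 < rho1Y μ σ q δ := rho1_pos' (μ - δ) σ q hσ hq
  have hK := Kpos μ σ q r hσ hq hr
  set a := rho2Y μ σ q δ with hadef
  set b := rho1Y μ σ q δ with hbdef
  set K := Kconst μ σ q r with hKdef
  set E := Real.exp (q * r) with hEdef
  have hab : 0 < a + b := by linarith
  have habne : a + b ≠ 0 := hab.ne'
  have hE : 0 < E := Real.exp_pos _
  have hσ2 : σ ^ 2 ≠ 0 := by positivity
  set C1 := (K + b * E) / (a + b) with hC1def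
  set C2 := (a * E - K) / (a + b) with hC2def
  have hC1 : 0 < C1 := div_pos (by nlinarith) hab
  have hKey : 0 < a * C1 - b * C2 := by
    have h : a * C1 - b * C2 = K := by rw [hC1def, hC2def]; field_simp; ring
    rw [h]; exact hK
  have hfe : Vq μ σ q δ r = fun x => C1 * Real.exp (a * x) + C2 * Real.exp (-(b * x)) := by
    funext x
    rw [hC1def, hC2def]
    simp only [Vq, WWq, rhoY, ← hadef, ← hbdef, ← hKdef, ← hEdef, neg_mul]
    field_simp
    ring
  have habs := abstract_min (Vq μ σ q δ r) a b C1 C2 β ha hb hC1 hβ hKey hfe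
  simpa only [gfun] using habs
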